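/- arXiv:1307.7524 — 5 statements merged into one kernel-verified Lean document; each statement's English description precedes it below -/
import Mathlib

section
/- Let 𝕋 be a Galton–Watson tree with offspring distribution μ, and labels generated as follows: Ũ(∅) = 0 and, conditionally on 𝕋, the increments Ũ(e₊) − Ũ(e₋) along edges are i.i.d. uniform on {−1, 0, 1}; then modified labels U are defined by U(v) = Ũ(v) for v ∉ ∂𝕋 and U(e₊) = Ũ(e₋) − 1 when e₊ ∈ ∂𝕋. For any fixed plane tree τ with n ≥ 1 edges and any admissible labeling U' on τ belonging to 𝒲°_n, the probability ℙ((𝕋, U) = (τ, U')) equals (1/z_β)^{n+1} · (β/3)^n, where β = (√3−1)/2 and z_β = (√3+1)/3. In particular this probability does not depend on (τ, U'), so the conditional law of (𝕋, U) given |𝕋| = n is uniform on 𝒲°_n. -/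
/-- A plane tree: a finite set of finite sequences of positive integers (here modelled as
lists of naturals with entries `≥ 1`), containing the root `[]`, closed under taking parents
(dropping the last coordinate), and such that the children of `u` present in the tree
are exactly `u ++ [j]` for `1 ≤ j ≤ k_u`. -/
structure PlaneTree where
  verts : Finset (List ℕ)
  root_mem : ([] : List ℕ) ∈ verts
  parent_mem : ∀ v ∈ verts, v ≠ ([] : List ℕ) → v.dropLast ∈ verts
  children : ∀ u ∈ verts, ∃ k : ℕ, ∀ j : ℕ, (u ++ [j]) ∈ verts ↔ 1 ≤ j ∧ j ≤ k

/-- The number of children `k_u(τ)` of a vertex `u` in the plane tree `τ`. -/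
def PlaneTree.numChildren (τ : PlaneTree) (u : List ℕ) : ℕ :=
  (τ.verts.filter (fun v => v ≠ [] ∧ v.dropLast = u)).card

/-- The set of edges of `τ`: pairs `(π(v), v)` for `v ∈ τ \ {∅}`. -/
def PlaneTree.edges (τ : PlaneTree) : Finset (List ℕ × List ℕ) :=
  (τ.verts.erase []).image (fun v => (v.dropLast, v))

/-- The set `∂τ` of leaves of `τ` different from the root. -/
def PlaneTree.leaves (τ : PlaneTree) : Finset (List ℕ) :=
  τ.verts.filter (fun v => v ≠ [] ∧ τ.numChildren v = 0)

/-
Each leaf contributes `μ 0 = 1/(3 z)` and each other vertex `v` contributes `β^{k_v}/z`, so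
`GW(τ) = β^{Σ k_v} z^{-(n+1)} 3^{-#∂τ} = β^n z^{-(n+1)} 3^{-#∂τ}`. The labels contribute
`3^{-(n - #∂τ)}`, and the powers of `3` combine to `3^{-n}` whatever the shape of `τ`.
-/

namespace PlaneTree

variable (τ : PlaneTree)

theorem sum_numChildren : ∑ u ∈ τ.verts, τ.numChildren u = (τ.verts.erase []).card := by
  rw [Finset.card_eq_sum_card_fiberwise (f := List.dropLast) (t := τ.verts)
    fun v hv => τ.parent_mem v (Finset.mem_of_mem_erase hv) (Finset.ne_of_mem_erase hv)]
  refine Finset.sum_congr rfl fun u _ => congrArg Finset.card ?_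
  ext v
  simp only [Finset.mem_filter, Finset.mem_erase]
  tauto

theorem leaves_subset_erase_root : τ.leaves ⊆ τ.verts.erase [] := fun v hv => by
  simp only [PlaneTree.leaves, Finset.mem_filter] at hv
  exact Finset.mem_erase.mpr ⟨hv.2.1, hv.1⟩

theorem card_leaves_le : τ.leaves.card ≤ τ.verts.card - 1 := by
  simpa [Finset.card_erase_of_mem τ.root_mem] using Finset.card_le_card τ.leaves_subset_erase_root

theorem exists_child_root_of_mem {v : List ℕ} (hv : v ∈ τ.verts) (hne : v ≠ []) :
    ∃ u ∈ τ.verts, u ≠ [] ∧ u.dropLast = [] := by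
  induction v using List.reverseRecOn with
  | nil => exact absurd rfl hne
  | append_singleton l a ih =>
    have hparent := τ.parent_mem _ hv hne
    rw [List.dropLast_concat] at hparent
    by_cases hl : l = []
    · exact ⟨l ++ [a], hv, hne, by simp [hl]⟩
    · exact ih hparent hl

theorem numChildren_root_pos (h : 2 ≤ τ.verts.card) : 0 < τ.numChildren [] := by
  obtain ⟨v, hv, hne⟩ := Finset.exists_mem_ne (s := τ.verts) h []
  obtain ⟨u, hu, hune, hud⟩ := τ.exists_child_root_of_mem hv hne
  exact Finset.card_pos.mpr ⟨u, Finset.mem_filter.mpr ⟨hu, hune, hud⟩⟩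

theorem numChildren_pos_of_not_mem_leaves (h : 2 ≤ τ.verts.card) {v : List ℕ}
    (hv : v ∈ τ.verts) (hleaf : v ∉ τ.leaves) : 0 < τ.numChildren v := by
  by_cases hroot : v = []
  · exact hroot ▸ τ.numChildren_root_pos h
  · simp only [PlaneTree.leaves, Finset.mem_filter, not_and] at hleaf
    exact Nat.pos_of_ne_zero (hleaf hv hroot)

section Weights

variable {K : Type*} [Field K] {β z : K} {μ : ℕ → K}

theorem weight_numChildren (h : 2 ≤ τ.verts.card) (hμ0 : μ 0 = 1 / (3 * z))
    (hμ : ∀ k : ℕ, 1 ≤ k → μ k = β ^ k / z) {v : List ℕ} (hv : v ∈ τ.verts) :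
    μ (τ.numChildren v) = β ^ τ.numChildren v * (1 / z) * if v ∈ τ.leaves then 1 / 3 else 1 := by
  by_cases hleaf : v ∈ τ.leaves
  · have hk : τ.numChildren v = 0 := (Finset.mem_filter.mp hleaf).2.2
    rw [if_pos hleaf, hk, hμ0]
    field_simp
  · rw [if_neg hleaf, hμ _ (τ.numChildren_pos_of_not_mem_leaves h hv hleaf)]
    ring

theorem prod_weight_numChildren (h : 2 ≤ τ.verts.card) (hμ0 : μ 0 = 1 / (3 * z))
    (hμ : ∀ k : ℕ, 1 ≤ k → μ k = β ^ k / z) :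
    ∏ v ∈ τ.verts, μ (τ.numChildren v)
      = β ^ (τ.verts.card - 1) * (1 / z) ^ τ.verts.card * (1 / 3) ^ τ.leaves.card := by
  have hleaves : τ.verts ∩ τ.leaves = τ.leaves :=
    Finset.inter_eq_right.mpr (τ.leaves_subset_erase_root.trans (Finset.erase_subset _ _))
  rw [Finset.prod_congr rfl fun v hv => τ.weight_numChildren h hμ0 hμ hv,
    Finset.prod_mul_distrib, Finset.prod_mul_distrib, Finset.prod_pow_eq_pow_sum,
    τ.sum_numChildren, Finset.card_erase_of_mem τ.root_mem, Finset.prod_const,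
    Finset.prod_ite_mem, hleaves, Finset.prod_const]

end Weights

end PlaneTree

/-- The probability of `(𝕋, U) = (τ, U')` is `GW(τ) · (1/3)^{n − #∂τ}`: the increments along
the `n − #∂τ` edges not ending at a leaf are uniform on `{−1,0,1}`, the others are forced. -/
theorem stmt_7_general (τ : PlaneTree) (n : ℕ) (hn : n = τ.verts.card - 1) (hn1 : 1 ≤ n)
    (β zβ : ℝ)
    (μ : ℕ → ℝ) (hμ0 : μ 0 = 1 / (3 * zβ)) (hμ : ∀ k : ℕ, 1 ≤ k → μ k = β ^ k / zβ) :
    (∏ v ∈ τ.verts, μ (τ.numChildren v)) * (1 / 3) ^ (n - τ.leaves.card)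
      = (1 / zβ) ^ (n + 1) * (β / 3) ^ n := by
  have hcard : τ.verts.card = n + 1 := by
    have := Finset.card_pos.mpr ⟨[], τ.root_mem⟩
    omega
  have hthirds : (1 / 3 : ℝ) ^ τ.leaves.card * (1 / 3) ^ (n - τ.leaves.card) = (1 / 3) ^ n := by
    rw [← pow_add, Nat.add_sub_cancel' (hn ▸ τ.card_leaves_le)]
  rw [τ.prod_weight_numChildren (by omega) hμ0 hμ, ← hn, hcard, mul_assoc, hthirds]
  ring

/-- Lemma 4.1 (quantitative form). Let `(τ, U')` be a labeled tree of `𝒲°_n` with `n ≥ 1`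
edges: `U'(∅) = 0`, increments along edges in `{−1,0,1}`, and `U'(e₊) = U'(e₋) − 1` for every
edge whose endpoint is a leaf `≠` root. The probability that the Galton–Watson tree `𝕋` with
offspring distribution `μ` together with the modified uniform labels `U` equals `(τ, U')` is
`GW(τ) · (1/3)^{n − #∂τ}` (the labels of the `n − #∂τ` edges not ending at a leaf are uniform
on `{−1,0,1}`, the others are determined), and this equals `(1/z_β)^{n+1} (β/3)^n`, a quantity
not depending on `(τ, U')`; hence the conditional law of `(𝕋, U)` given `|𝕋| = n` is uniform
on `𝒲°_n`. -/
theorem stmt_7 (τ : PlaneTree) (n : ℕ) (hn : n = τ.verts.card - 1) (hn1 : 1 ≤ n)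
    (U' : List ℕ → ℤ) (hU0 : U' [] = 0)
    (hinc : ∀ v ∈ τ.verts, v ≠ [] → |U' v - U' v.dropLast| ≤ 1)
    (hleaf : ∀ v ∈ τ.leaves, U' v = U' v.dropLast - 1)
    (β zβ : ℝ) (hβ : β = (Real.sqrt 3 - 1) / 2) (hz : zβ = (Real.sqrt 3 + 1) / 3)
    (μ : ℕ → ℝ) (hμ0 : μ 0 = 1 / (3 * zβ)) (hμ : ∀ k : ℕ, 1 ≤ k → μ k = β ^ k / zβ) :
    (∏ v ∈ τ.verts, μ (τ.numChildren v)) * (1 / 3) ^ (n - τ.leaves.card)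
      = (1 / zβ) ^ (n + 1) * (β / 3) ^ n :=
  stmt_7_general τ n hn hn1 β zβ μ hμ0 hμ
end

section
/- Let Φ_n be Schaeffer's bijection from well-labeled trees with n edges to rooted quadrangulations with n faces, and let (τ, U) ∈ 𝒲⁺_n with contour exploration sequence v_0,…,v_{2n}. The quadrangulation Φ_n(τ, U) has no vertex of degree 1 if and only if: (i) for every leaf v of τ with adjacent vertex w, U(v) = U(w) − 1; and (ii) there exists i ∈ {1,…,2n−1} with U(v_i) = 0. -/
open scoped Classical

/-- The successor of a corner `i` in Schaeffer's construction:
`succ(i) = min{ j ≥ i : U(v_j) = U(v_i) − 1 }` (the contour sequence `v` being extended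
periodically). -/
noncomputable def succCorner (U : List ℕ → ℤ) (v : ℕ → List ℕ) (i : ℕ) : ℕ :=
  sInf {j : ℕ | i ≤ j ∧ U (v j) = U (v i) - 1}

/-- The arcs of Schaeffer's construction: the corner `i` (with vertex `v_i`) is joined to the
extra vertex `∂` (encoded by `none`) if `U(v_i) = 0`, and to the corner `succ(i)` otherwise. -/
noncomputable def cornerEdge (U : List ℕ → ℤ) (v : ℕ → List ℕ) (i : ℕ) :
    Option (List ℕ) × Option (List ℕ) :=
  (some (v i), if U (v i) = 0 then none else some (v (succCorner U v i)))

/-- The graph of the quadrangulation `Φ_n(τ, U)` built by Schaeffer's bijection: its vertices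
are the vertices of the tree together with `∂` (encoded by `none`), two vertices being
adjacent when some arc of the construction joins them. -/
noncomputable def schaefferGraph (n : ℕ) (U : List ℕ → ℤ) (v : ℕ → List ℕ) :
    SimpleGraph (Option (List ℕ)) where
  Adj x y := x ≠ y ∧ ∃ i < 2 * n, cornerEdge U v i = (x, y) ∨ cornerEdge U v i = (y, x)
  symm := ⟨by
    rintro x y ⟨hne, i, hi, h⟩
    exact ⟨hne.symm, i, hi, h.symm⟩⟩
  loopless := ⟨fun x h => h.1 rfl⟩

/-- The degree, in the quadrangulation `Φ_n(τ, U)`, of a vertex `x` of the tree: the number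
of arcs starting from a corner of `x`, plus the number of arcs arriving at a corner of `x`. -/
noncomputable def degTree (n : ℕ) (U : List ℕ → ℤ) (v : ℕ → List ℕ) (x : List ℕ) : ℕ :=
  ((Finset.range (2 * n)).filter (fun i => v i = x)).card +
    ((Finset.range (2 * n)).filter
      (fun i => U (v i) ≠ 0 ∧ v (succCorner U v i) = x)).card

/-- The degree, in the quadrangulation `Φ_n(τ, U)`, of the extra root vertex `∂`: the number
of corners of the tree with label `0`. -/
noncomputable def degRoot (n : ℕ) (U : List ℕ → ℤ) (v : ℕ → List ℕ) : ℕ :=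
  ((Finset.range (2 * n)).filter (fun i => U (v i) = 0)).card

/-!
A vertex of the quadrangulation has one edge per corner of the tree at that vertex, plus one per
arc arriving at it, so only vertices with a single corner are at risk: the non-root leaves, the
root when it has one child, and `∂`, whose degree is the number of corners labelled `0`. An arc
leaving a corner `i` arrives at the first later corner `s` with label `U(v_i) - 1`; by the
discrete intermediate value theorem all labels on `[i, s)` are at least `U(v_i)`, so the corner
`s - 1` just before the arrival carries the label `U(v_s) + 1`. For a vertex with a single corner
that previous corner is its neighbour in the tree, so an arc arrives exactly when the neighbour's
label is one more.
-/

open Finset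

theorem exists_eq_of_abs_succ_sub_le_one {f : ℕ → ℤ} (hf : ∀ i, |f (i + 1) - f i| ≤ 1)
    {a b : ℕ} {c : ℤ} (hab : a ≤ b) (ha : c ≤ f a) (hb : f b ≤ c) :
    ∃ j, a ≤ j ∧ j ≤ b ∧ f j = c := by
  induction b, hab using Nat.le_induction with
  | base => exact ⟨a, le_rfl, le_rfl, le_antisymm hb ha⟩
  | succ b hab ih =>
    by_cases hfb : f b ≤ c
    · obtain ⟨j, haj, hjb, hj⟩ := ih hfb
      exact ⟨j, haj, hjb.trans b.le_succ, hj⟩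
    · have := abs_le.1 (hf b)
      exact ⟨b + 1, hab.trans b.le_succ, le_rfl, by omega⟩

theorem two_le_card_filter_range_iff {p : ℕ → Prop} [DecidablePred p] (h0 : p 0) (m : ℕ) :
    2 ≤ #{i ∈ range m | p i} ↔ ∃ i, 1 ≤ i ∧ i ≤ m - 1 ∧ p i := by
  constructor
  · intro h
    obtain ⟨a, ha, b, hb, hab⟩ := one_lt_card.1 h
    simp only [mem_filter, mem_range] at ha hb
    rcases Nat.eq_zero_or_pos a with rfl | ha0
    · exact ⟨b, by omega, by omega, hb.2⟩
    · exact ⟨a, ha0, by omega, ha.2⟩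
  · rintro ⟨i, hi1, hi2, hi⟩
    exact one_lt_card.2 ⟨0, mem_filter.2 ⟨mem_range.2 (by omega), h0⟩, i,
      mem_filter.2 ⟨mem_range.2 (by omega), hi⟩, by omega⟩

section succCorner

variable {U : List ℕ → ℤ} {v : ℕ → List ℕ} {i : ℕ}

theorem succCorner_le {j : ℕ} (hij : i ≤ j) (hj : U (v j) = U (v i) - 1) :
    succCorner U v i ≤ j :=
  Nat.sInf_le ⟨hij, hj⟩

theorem lt_succCorner_and_label_succCorner (h : ∃ j, i ≤ j ∧ U (v j) = U (v i) - 1) :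
    i < succCorner U v i ∧ U (v (succCorner U v i)) = U (v i) - 1 := by
  obtain ⟨hi, hs⟩ : succCorner U v i ∈ {j | i ≤ j ∧ U (v j) = U (v i) - 1} := Nat.sInf_mem h
  refine ⟨lt_of_le_of_ne hi fun his => ?_, hs⟩
  rw [← his] at hs
  omega

theorem succCorner_eq_succ (h : U (v (i + 1)) = U (v i) - 1) : succCorner U v i = i + 1 :=
  le_antisymm (succCorner_le i.le_succ h) (lt_succCorner_and_label_succCorner ⟨_, i.le_succ, h⟩).1

theorem le_label_of_lt_succCorner (hstep : ∀ j, |U (v (j + 1)) - U (v j)| ≤ 1) {j : ℕ}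
    (hij : i ≤ j) (hj : j < succCorner U v i) : U (v i) ≤ U (v j) := by
  by_contra! hlt
  obtain ⟨m, him, hmj, hm⟩ := exists_eq_of_abs_succ_sub_le_one (f := fun j => U (v j)) hstep hij
    (c := U (v i) - 1) (by omega) (by omega)
  exact absurd (succCorner_le him hm) (by omega)

theorem succCorner_spec (hstep : ∀ j, |U (v (j + 1)) - U (v j)| ≤ 1) {b : ℕ} (hib : i ≤ b)
    (hlt : U (v b) < U (v i)) :
    i < succCorner U v i ∧ succCorner U v i ≤ b ∧ U (v (succCorner U v i)) = U (v i) - 1 := by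
  obtain ⟨m, him, hmb, hm⟩ := exists_eq_of_abs_succ_sub_le_one (f := fun j => U (v j)) hstep hib
    (c := U (v i) - 1) (by omega) (by omega)
  obtain ⟨hlt, hs⟩ := lt_succCorner_and_label_succCorner ⟨m, him, hm⟩
  exact ⟨hlt, (succCorner_le him hm).trans hmb, hs⟩

theorem label_pred_succCorner (hstep : ∀ j, |U (v (j + 1)) - U (v j)| ≤ 1) {b : ℕ}
    (hib : i ≤ b) (hlt : U (v b) < U (v i)) :
    U (v (succCorner U v i - 1)) = U (v (succCorner U v i)) + 1 := by
  obtain ⟨his, -, hs⟩ := succCorner_spec hstep hib hlt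
  have hge := le_label_of_lt_succCorner hstep (i := i) (j := succCorner U v i - 1)
    (by omega) (by omega)
  have hle := abs_le.1 (hstep (succCorner U v i - 1))
  rw [Nat.sub_add_cancel (by omega)] at hle
  omega

end succCorner

theorem two_le_degTree_of_descent {n : ℕ} {U : List ℕ → ℤ} {v : ℕ → List ℕ} {x : List ℕ}
    {c k : ℕ} (hc : c < 2 * n) (hvc : v c = x) (hk : k < 2 * n) (hvk : v (k + 1) = x)
    (hd : U (v (k + 1)) = U (v k) - 1) (hne : U (v k) ≠ 0) : 2 ≤ degTree n U v x := by
  have hcorner : 0 < #{i ∈ range (2 * n) | v i = x} := card_pos.2 ⟨c, by simp [hc, hvc]⟩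
  have harc : 0 < #{i ∈ range (2 * n) | U (v i) ≠ 0 ∧ v (succCorner U v i) = x} :=
    card_pos.2 ⟨k, by simp [hk, hne, succCorner_eq_succ hd, hvk]⟩
  rw [degTree]
  omega

namespace PlaneTree

theorem append_singleton_mem_iff (τ : PlaneTree) {u : List ℕ} (hu : u ∈ τ.verts) (j : ℕ) :
    u ++ [j] ∈ τ.verts ↔ 1 ≤ j ∧ j ≤ τ.numChildren u := by
  obtain ⟨k, hk⟩ := τ.children u hu
  suffices τ.verts.filter (fun w => w ≠ [] ∧ w.dropLast = u) = (Icc 1 k).image (u ++ [·]) by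
    rw [numChildren, this, card_image_of_injective _ fun a b h => by simpa using h, Nat.card_Icc,
      Nat.add_sub_cancel, hk]
  ext w
  simp only [mem_filter, mem_image, mem_Icc]
  constructor
  · rintro ⟨hw, hne, rfl⟩
    have hw' : w.dropLast ++ [w.getLast hne] = w := List.dropLast_append_getLast hne
    exact ⟨_, (hk _).1 (by rwa [hw']), hw'⟩
  · rintro ⟨j, hj, rfl⟩
    exact ⟨(hk j).2 hj, by simp, List.dropLast_concat⟩

theorem dropLast_ne_of_numChildren_eq_zero {τ : PlaneTree} {x w : List ℕ}
    (hx : τ.numChildren x = 0) (hw : w ∈ τ.verts) (hne : w ≠ []) : w.dropLast ≠ x := by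
  intro h
  have : w ∈ τ.verts.filter (fun w => w ≠ [] ∧ w.dropLast = x) := mem_filter.2 ⟨hw, hne, h⟩
  rw [card_eq_zero.1 hx] at this
  exact notMem_empty w this

/-- `v` is the contour exploration of `τ` (which has `n` edges), extended `2n`-periodically:
`v i` is the vertex of the `i`-th corner. -/
structure IsContour (τ : PlaneTree) (n : ℕ) (v : ℕ → List ℕ) : Prop where
  zero : v 0 = []
  periodic : ∀ i, v (i + 2 * n) = v i
  mem : ∀ i, v i ∈ τ.verts
  step : ∀ i, ((v (i + 1)).dropLast = v i ∧ v (i + 1) ≠ []) ∨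
      ((v i).dropLast = v (i + 1) ∧ v i ≠ [])
  card_corners : ∀ w ∈ τ.verts, ((Finset.range (2 * n)).filter (fun i => v i = w)).card
      = τ.numChildren w + (if w = [] then 0 else 1)

structure IsWellLabeling (τ : PlaneTree) (U : List ℕ → ℤ) : Prop where
  root : U [] = 0
  abs_sub_le_one : ∀ w ∈ τ.verts, w ≠ [] → |U w - U w.dropLast| ≤ 1
  nonneg : ∀ w ∈ τ.verts, 0 ≤ U w

namespace IsContour

variable {τ : PlaneTree} {n : ℕ} {v : ℕ → List ℕ} {U : List ℕ → ℤ}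

theorem apply_two_mul (hv : τ.IsContour n v) : v (2 * n) = [] := by
  simpa [hv.zero] using hv.periodic 0

theorem abs_label_step_le_one (hv : τ.IsContour n v) (hU : τ.IsWellLabeling U) (i : ℕ) :
    |U (v (i + 1)) - U (v i)| ≤ 1 := by
  rcases hv.step i with ⟨hd, hne⟩ | ⟨hd, hne⟩
  · simpa [hd] using hU.abs_sub_le_one _ (hv.mem (i + 1)) hne
  · simpa [hd, abs_sub_comm] using hU.abs_sub_le_one _ (hv.mem i) hne

theorem one_le_numChildren_nil (hv : τ.IsContour n v) : 1 ≤ τ.numChildren [] := by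
  rcases hv.step 0 with ⟨hd, hne⟩ | ⟨-, hne⟩
  · exact card_pos.2 ⟨v 1, mem_filter.2 ⟨hv.mem 1, hne, hd.trans hv.zero⟩⟩
  · exact absurd hv.zero hne

theorem apply_eq_dropLast_of_numChildren_eq_zero (hv : τ.IsContour n v) {x : List ℕ}
    (hx : τ.numChildren x = 0) {j : ℕ} (hj : v (j + 1) = x) : v j = x.dropLast := by
  rcases hv.step j with ⟨hd, -⟩ | ⟨hd, hne⟩
  · rw [← hd, hj]
  · exact absurd (hd.trans hj) (dropLast_ne_of_numChildren_eq_zero hx (hv.mem j) hne)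

theorem exists_succ_apply_eq (hv : τ.IsContour n v) {x : List ℕ} (hx : x ∈ τ.verts)
    (hne : x ≠ []) : ∃ k, k + 1 < 2 * n ∧ v (k + 1) = x := by
  have hcard := hv.card_corners x hx
  rw [if_neg hne] at hcard
  obtain ⟨j, hj⟩ := card_pos.1 (hcard.trans_gt (Nat.succ_pos _))
  obtain ⟨hjr, rfl⟩ := mem_filter.1 hj
  obtain ⟨k, rfl⟩ : ∃ k, j = k + 1 := Nat.exists_eq_succ_of_ne_zero fun h => hne (h ▸ hv.zero)
  exact ⟨k, mem_range.1 hjr, rfl⟩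

theorem eq_zero_of_apply_eq_nil (hv : τ.IsContour n v) (h1 : τ.numChildren [] = 1) {m : ℕ}
    (hm : m < 2 * n) (hvm : v m = []) : m = 0 := by
  have hcard := hv.card_corners [] τ.root_mem
  rw [h1, if_pos rfl] at hcard
  obtain ⟨a, ha⟩ := card_eq_one.1 hcard
  have h0 : 0 ∈ ({a} : Finset ℕ) := ha ▸ mem_filter.2 ⟨mem_range.2 (by omega), hv.zero⟩
  have hm : m ∈ ({a} : Finset ℕ) := ha ▸ mem_filter.2 ⟨mem_range.2 hm, hvm⟩
  rw [mem_singleton] at h0 hm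
  omega

theorem apply_two_mul_sub_one (hv : τ.IsContour n v) (hn : 1 ≤ n)
    (h1 : τ.numChildren [] = 1) : v (2 * n - 1) = [1] := by
  have h2n : 2 * n - 1 + 1 = 2 * n := by omega
  rcases hv.step (2 * n - 1) with ⟨-, hne⟩ | ⟨hd, hne⟩
  · exact absurd hv.apply_two_mul (h2n ▸ hne)
  · rw [h2n, hv.apply_two_mul] at hd
    obtain ⟨a, ha⟩ : ∃ a, v (2 * n - 1) = [] ++ [a] :=
      ⟨_, (List.dropLast_append_getLast hne).symm.trans (by rw [hd])⟩
    have hmem := τ.append_singleton_mem_iff τ.root_mem a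
    rw [← ha, h1] at hmem
    rw [ha, show a = 1 by have := hmem.1 (hv.mem _); omega]
    rfl

theorem two_le_degTree_of_corners (hv : τ.IsContour n v) {x : List ℕ} (hx : x ∈ τ.verts)
    (h : 2 ≤ τ.numChildren x + if x = [] then 0 else 1) : 2 ≤ degTree n U v x := by
  rw [degTree, hv.card_corners x hx]
  omega

theorem exists_arc_of_two_le_degTree (hv : τ.IsContour n v) {x : List ℕ} (hx : x ∈ τ.verts)
    (h1 : τ.numChildren x + (if x = [] then 0 else 1) = 1) (h : 2 ≤ degTree n U v x) :
    ∃ i < 2 * n, U (v i) ≠ 0 ∧ v (succCorner U v i) = x := by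
  rw [degTree, hv.card_corners x hx, h1] at h
  obtain ⟨i, hi⟩ := card_pos.1 (by omega : 0 < #{i ∈ range (2 * n) |
    U (v i) ≠ 0 ∧ v (succCorner U v i) = x})
  simp only [mem_filter, mem_range] at hi
  exact ⟨i, hi.1, hi.2⟩

theorem succCorner_le_and_label_pred (hv : τ.IsContour n v) (hU : τ.IsWellLabeling U) {i : ℕ}
    (hi : i ≤ 2 * n) (hUi : U (v i) ≠ 0) :
    i < succCorner U v i ∧ succCorner U v i ≤ 2 * n ∧
      U (v (succCorner U v i - 1)) = U (v (succCorner U v i)) + 1 := by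
  have hlt : U (v (2 * n)) < U (v i) := by
    rw [hv.apply_two_mul, hU.root]
    exact lt_of_le_of_ne (hU.nonneg _ (hv.mem i)) hUi.symm
  obtain ⟨his, hs2n, -⟩ := succCorner_spec (hv.abs_label_step_le_one hU) hi hlt
  exact ⟨his, hs2n, label_pred_succCorner (hv.abs_label_step_le_one hU) hi hlt⟩

theorem two_le_degTree_leaf_iff (hv : τ.IsContour n v) (hU : τ.IsWellLabeling U)
    {x : List ℕ} (hx : x ∈ τ.verts) (hne : x ≠ []) (h0 : τ.numChildren x = 0) :
    2 ≤ degTree n U v x ↔ U x = U x.dropLast - 1 := by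
  constructor
  · intro h
    obtain ⟨i, hi, hUi, hs⟩ := hv.exists_arc_of_two_le_degTree hx (by simp [h0, hne]) h
    obtain ⟨his, -, hlabel⟩ := hv.succCorner_le_and_label_pred hU hi.le hUi
    rw [hv.apply_eq_dropLast_of_numChildren_eq_zero h0 (j := succCorner U v i - 1)
      (by rwa [Nat.sub_add_cancel (by omega)]), hs] at hlabel
    omega
  · intro hlabel
    obtain ⟨k, hk, hvk⟩ := hv.exists_succ_apply_eq hx hne
    have hparent := hv.apply_eq_dropLast_of_numChildren_eq_zero h0 hvk
    have := hU.nonneg x hx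
    exact two_le_degTree_of_descent hk hvk (by omega) hvk (by rw [hvk, hparent]; omega)
      (by rw [hparent]; omega)

theorem two_le_degTree_nil_iff (hv : τ.IsContour n v) (hU : τ.IsWellLabeling U) (hn : 1 ≤ n)
    (h1 : τ.numChildren [] = 1) : 2 ≤ degTree n U v [] ↔ U [1] = 1 := by
  constructor
  · intro h
    obtain ⟨i, hi, hUi, hs⟩ := hv.exists_arc_of_two_le_degTree τ.root_mem (by simp [h1]) h
    obtain ⟨his, hs2n, hlabel⟩ := hv.succCorner_le_and_label_pred hU hi.le hUi
    -- `[]` has a single corner below `2 * n`, namely `0`, so the arc arrives at the corner `2 * n`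
    have h2n : succCorner U v i = 2 * n := by
      by_contra hne
      exact absurd (hv.eq_zero_of_apply_eq_nil h1 (by omega) hs) (by omega)
    rwa [hs, h2n, hv.apply_two_mul_sub_one hn h1, hU.root, zero_add] at hlabel
  · intro hlabel
    have h2n : 2 * n - 1 + 1 = 2 * n := by omega
    have hv1 := hv.apply_two_mul_sub_one hn h1
    have hv2n : v (2 * n - 1 + 1) = [] := h2n ▸ hv.apply_two_mul
    exact two_le_degTree_of_descent (c := 0) (by omega) hv.zero (by omega) hv2n
      (by rw [hv2n, hv1, hU.root, hlabel]; rfl) (by rw [hv1, hlabel]; decide)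

end IsContour

end PlaneTree

theorem stmt_12_general (n : ℕ) (hn : 1 ≤ n) (τ : PlaneTree)
    (v : ℕ → List ℕ) (hv0 : v 0 = []) (hper : ∀ i, v (i + 2 * n) = v i)
    (hmem : ∀ i, v i ∈ τ.verts)
    (hstep : ∀ i, ((v (i + 1)).dropLast = v i ∧ v (i + 1) ≠ []) ∨
      ((v i).dropLast = v (i + 1) ∧ v i ≠ []))
    (hcount : ∀ w ∈ τ.verts, ((Finset.range (2 * n)).filter (fun i => v i = w)).card
      = τ.numChildren w + (if w = [] then 0 else 1))
    (U : List ℕ → ℤ) (hU0 : U [] = 0)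
    (hinc : ∀ w ∈ τ.verts, w ≠ [] → |U w - U w.dropLast| ≤ 1)
    (hpos : ∀ w ∈ τ.verts, 0 ≤ U w) :
    (2 ≤ degRoot n U v ∧ ∀ x ∈ τ.verts, 2 ≤ degTree n U v x) ↔
      (((∀ x ∈ τ.verts, x ≠ [] → τ.numChildren x = 0 → U x = U x.dropLast - 1) ∧
        (τ.numChildren [] = 1 → U [1] = 1)) ∧
       (∃ i : ℕ, 1 ≤ i ∧ i ≤ 2 * n - 1 ∧ U (v i) = 0)) := by
  have hv : τ.IsContour n v := ⟨hv0, hper, hmem, hstep, hcount⟩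
  have hU : τ.IsWellLabeling U := ⟨hU0, hinc, hpos⟩
  rw [degRoot, two_le_card_filter_range_iff (by rw [hv0, hU0])]
  constructor
  · rintro ⟨hroot, hdeg⟩
    exact ⟨⟨fun x hx hne h0 => (hv.two_le_degTree_leaf_iff hU hx hne h0).1 (hdeg x hx),
      fun h1 => (hv.two_le_degTree_nil_iff hU hn h1).1 (hdeg [] τ.root_mem)⟩, hroot⟩
  · rintro ⟨⟨hleaf, hnil⟩, hroot⟩
    refine ⟨hroot, fun x hx => ?_⟩
    rcases eq_or_ne x [] with rfl | hne
    · rcases hv.one_le_numChildren_nil.eq_or_lt with h1 | hlt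
      · exact (hv.two_le_degTree_nil_iff hU hn h1.symm).2 (hnil h1.symm)
      · exact hv.two_le_degTree_of_corners hx (by rw [if_pos rfl]; omega)
    · rcases Nat.eq_zero_or_pos (τ.numChildren x) with h0 | hchild
      · exact (hv.two_le_degTree_leaf_iff hU hx hne h0).2 (hleaf x hx hne h0)
      · exact hv.two_le_degTree_of_corners hx (by rw [if_neg hne]; omega)

/-- Proposition 2.2: the quadrangulation `Φ_n(τ, U)` obtained from a well-labeled tree with
`n` edges via Schaeffer's bijection is nice (every vertex has degree `≥ 2`) if and only if
(i) for every leaf `v` of `τ` with adjacent vertex `w` one has `U(v) = U(w) − 1`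
(for the root `∅`, a leaf when `k_∅ = 1`, the adjacent vertex is its unique child `[1]`), and
(ii) there exists `i ∈ {1, …, 2n−1}` with `U(v_i) = 0`. -/
theorem stmt_12 (n : ℕ) (hn : 1 ≤ n) (τ : PlaneTree) (hcard : τ.verts.card = n + 1)
    (v : ℕ → List ℕ) (hv0 : v 0 = []) (hper : ∀ i, v (i + 2 * n) = v i)
    (hmem : ∀ i, v i ∈ τ.verts)
    (hstep : ∀ i, ((v (i + 1)).dropLast = v i ∧ v (i + 1) ≠ []) ∨
      ((v i).dropLast = v (i + 1) ∧ v i ≠ []))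
    (hsurj : ∀ w ∈ τ.verts, ∃ i < 2 * n, v i = w)
    (hcount : ∀ w ∈ τ.verts, ((Finset.range (2 * n)).filter (fun i => v i = w)).card
      = τ.numChildren w + (if w = [] then 0 else 1))
    (U : List ℕ → ℤ) (hU0 : U [] = 0)
    (hinc : ∀ w ∈ τ.verts, w ≠ [] → |U w - U w.dropLast| ≤ 1)
    (hpos : ∀ w ∈ τ.verts, 0 ≤ U w) :
    (2 ≤ degRoot n U v ∧ ∀ x ∈ τ.verts, 2 ≤ degTree n U v x) ↔
      (((∀ x ∈ τ.verts, x ≠ [] → τ.numChildren x = 0 → U x = U x.dropLast - 1) ∧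
        (τ.numChildren [] = 1 → U [1] = 1)) ∧
       (∃ i : ℕ, 1 ≤ i ∧ i ≤ 2 * n - 1 ∧ U (v i) = 0)) :=
  stmt_12_general n hn τ v hv0 hper hmem hstep hcount U hU0 hinc hpos
end

section
/- In Schaeffer's bijection, labels become distances to the root vertex: if q = Φ_n(τ, U) with (τ, U) ∈ 𝒲⁺_n and ∂ is the root vertex of q, then for every vertex v of τ (i.e., every vertex of q other than ∂), the graph distance in q satisfies d_gr(∂, v) = U(v) + 1. -/
open scoped Classical

/-!
Shift the labels by one and give `∂` the value `0`. An arc of the construction joins a corner of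
label `ℓ > 0` to one of label `ℓ - 1`, or a corner of label `0` to `∂`, so the shifted label is
`1`-Lipschitz on the graph and bounds the distance to `∂` from below. Conversely, following arcs
from any corner lowers the label by one at each step and reaches `∂` after exactly `U(v) + 1`
steps. The successor corner always exists by a discrete intermediate value argument: labels move
by at most one along the contour, which returns to the root, of label `0`, once per period.
-/

theorem exists_mem_Icc_eq_of_abs_sub_le_one {g : ℕ → ℤ} (hg : ∀ j, |g (j + 1) - g j| ≤ 1)
    {i k : ℕ} (hik : i ≤ k) {c : ℤ} (hk : g k ≤ c) (hi : c ≤ g i) :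
    ∃ j ∈ Finset.Icc i k, g j = c := by
  induction k, hik using Nat.le_induction with
  | base => exact ⟨i, Finset.left_mem_Icc.2 le_rfl, le_antisymm hk hi⟩
  | succ k hik ih =>
    by_cases hkc : g (k + 1) = c
    · exact ⟨k + 1, Finset.mem_Icc.2 ⟨by omega, le_rfl⟩, hkc⟩
    · have hgk := abs_le.1 (hg k)
      obtain ⟨j, hj, hjc⟩ := ih (by omega)
      exact ⟨j, Finset.Icc_subset_Icc_right k.le_succ hj, hjc⟩

theorem label_succCorner {U : List ℕ → ℤ} {v : ℕ → List ℕ}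
    (hlab : ∀ j, |U (v (j + 1)) - U (v j)| ≤ 1) (hret : ∀ i, ∃ j ≥ i, U (v j) = 0)
    {i : ℕ} (hi : 0 < U (v i)) : U (v (succCorner U v i)) = U (v i) - 1 := by
  obtain ⟨k, hik, hk⟩ := hret i
  obtain ⟨j, hj, hjc⟩ := exists_mem_Icc_eq_of_abs_sub_le_one (g := fun j => U (v j)) hlab hik
    (c := U (v i) - 1) (by omega) (by omega)
  exact (Nat.sInf_mem (⟨j, (Finset.mem_Icc.1 hj).1, hjc⟩ :
    ∃ j, i ≤ j ∧ U (v j) = U (v i) - 1)).2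

namespace SimpleGraph

variable {V : Type*} {G : SimpleGraph V} {f : V → ℕ}

theorem Walk.le_add_length (hf : ∀ x y, G.Adj x y → f y ≤ f x + 1) {a b : V}
    (p : G.Walk a b) : f b ≤ f a + p.length := by
  induction p with
  | nil => simp
  | cons h q ih => have := hf _ _ h; rw [Walk.length_cons]; omega

theorem exists_walk_length_eq_of_descent {S : Set V} {r : V} (hr : f r = 0)
    (hdesc : ∀ x ∈ S, x ≠ r → ∃ y ∈ S, G.Adj x y ∧ f y + 1 = f x) {x : V} (hx : x ∈ S) :
    ∃ p : G.Walk x r, p.length = f x := by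
  induction hfx : f x generalizing x with
  | zero =>
    obtain rfl : x = r := by
      by_contra hne
      obtain ⟨y, -, -, hy⟩ := hdesc x hx hne
      omega
    exact ⟨Walk.nil, rfl⟩
  | succ m ih =>
    obtain ⟨y, hyS, hxy, hy⟩ := hdesc x hx (by rintro rfl; omega)
    obtain ⟨p, hp⟩ := ih hyS (by omega)
    exact ⟨Walk.cons hxy p, by rw [Walk.length_cons, hp]⟩

theorem dist_eq_of_descent (hf : ∀ x y, G.Adj x y → f y ≤ f x + 1) {S : Set V} {r : V}
    (hr : f r = 0) (hdesc : ∀ x ∈ S, x ≠ r → ∃ y ∈ S, G.Adj x y ∧ f y + 1 = f x) {x : V}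
    (hx : x ∈ S) : G.dist r x = f x := by
  obtain ⟨p, hp⟩ := exists_walk_length_eq_of_descent hr hdesc hx
  obtain ⟨q, hq⟩ := (show G.Reachable r x from ⟨p.reverse⟩).exists_walk_length_eq_dist
  have hupper := G.dist_le p.reverse
  have hlower := q.le_add_length hf
  rw [Walk.length_reverse] at hupper
  omega

end SimpleGraph

def shiftedLabel (U : List ℕ → ℤ) : Option (List ℕ) → ℕ
  | none => 0
  | some w => (U w).toNat + 1

section Schaeffer

variable {n : ℕ} {U : List ℕ → ℤ} {v : ℕ → List ℕ}

/-- `∂` together with the vertices visited by the contour (`w ∈ x` means `x = some w`). -/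
def schaefferVertices (v : ℕ → List ℕ) : Set (Option (List ℕ)) :=
  {x | ∀ w ∈ x, ∃ j, v j = w}

theorem schaefferGraph_adj_shiftedLabel_le (hnonneg : ∀ i, 0 ≤ U (v i))
    (hsucc : ∀ i, 0 < U (v i) → U (v (succCorner U v i)) = U (v i) - 1) {x y : Option (List ℕ)}
    (hxy : (schaefferGraph n U v).Adj x y) : shiftedLabel U y ≤ shiftedLabel U x + 1 := by
  obtain ⟨-, i, -, hxy⟩ := hxy
  have hedge : ∀ {a b}, cornerEdge U v i = (a, b) →
      shiftedLabel U a ≤ shiftedLabel U b + 1 ∧ shiftedLabel U b ≤ shiftedLabel U a + 1 := by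
    intro a b hab
    obtain ⟨rfl, rfl⟩ := Prod.mk.inj hab.symm
    have := hnonneg i
    by_cases h0 : U (v i) = 0
    · simp [shiftedLabel, h0]
    · have := hsucc i (by omega)
      simp only [shiftedLabel, h0, if_false, this]
      omega
  rcases hxy with h | h
  exacts [(hedge h).2, (hedge h).1]

theorem schaefferGraph_exists_adj_shiftedLabel_succ (hn : 0 < n)
    (hper : Function.Periodic v (2 * n)) (hnonneg : ∀ i, 0 ≤ U (v i))
    (hsucc : ∀ i, 0 < U (v i) → U (v (succCorner U v i)) = U (v i) - 1) (i : ℕ) :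
    ∃ y ∈ schaefferVertices v, (schaefferGraph n U v).Adj (some (v i)) y ∧
      shiftedLabel U y + 1 = shiftedLabel U (some (v i)) := by
  rw [← hper.map_mod_nat i]
  have hlt : i % (2 * n) < 2 * n := Nat.mod_lt _ (by omega)
  set k := i % (2 * n)
  by_cases h0 : U (v k) = 0
  · refine ⟨none, by simp [schaefferVertices], ⟨by simp, k, hlt, Or.inl ?_⟩, by simp [shiftedLabel, h0]⟩
    simp [cornerEdge, h0]
  · have hlabel := hsucc k (lt_of_le_of_ne (hnonneg k) (Ne.symm h0))
    have := hnonneg k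
    refine ⟨some (v (succCorner U v k)), fun w hw => ⟨_, Option.some_inj.1 hw⟩,
      ⟨fun h => ?_, k, hlt, Or.inl (by simp [cornerEdge, h0])⟩, ?_⟩
    · rw [Option.some_inj.1 h] at hlabel
      omega
    · simp only [shiftedLabel, hlabel]
      omega

theorem dist_schaefferGraph (hn : 0 < n) (hper : Function.Periodic v (2 * n)) (hv0 : v 0 = [])
    (hU0 : U [] = 0) (hlab : ∀ j, |U (v (j + 1)) - U (v j)| ≤ 1) (hnonneg : ∀ i, 0 ≤ U (v i))
    (i : ℕ) : (schaefferGraph n U v).dist none (some (v i)) = (U (v i)).toNat + 1 := by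
  have hret : ∀ i, ∃ j ≥ i, U (v j) = 0 := fun i =>
    ⟨i * (2 * n), Nat.le_mul_of_pos_right i (by omega), by
      rw [← hper.map_mod_nat, Nat.mul_mod_left, hv0, hU0]⟩
  have hsucc : ∀ i, 0 < U (v i) → U (v (succCorner U v i)) = U (v i) - 1 :=
    fun _ => label_succCorner hlab hret
  refine SimpleGraph.dist_eq_of_descent
    (fun _ _ => schaefferGraph_adj_shiftedLabel_le hnonneg hsucc)
    (S := schaefferVertices v) rfl ?_ fun w hw => ⟨i, Option.some_inj.1 hw⟩
  rintro (_ | w) hx hne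
  · exact absurd rfl hne
  · obtain ⟨j, rfl⟩ := hx w rfl
    exact schaefferGraph_exists_adj_shiftedLabel_succ hn hper hnonneg hsucc j

end Schaeffer

theorem stmt_13_general (n : ℕ) (hn : 1 ≤ n) (τ : PlaneTree)
    (v : ℕ → List ℕ) (hv0 : v 0 = []) (hper : ∀ i, v (i + 2 * n) = v i)
    (hmem : ∀ i, v i ∈ τ.verts)
    (hstep : ∀ i, ((v (i + 1)).dropLast = v i ∧ v (i + 1) ≠ []) ∨
      ((v i).dropLast = v (i + 1) ∧ v i ≠ []))
    (hsurj : ∀ w ∈ τ.verts, ∃ i < 2 * n, v i = w)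
    (U : List ℕ → ℤ) (hU0 : U [] = 0)
    (hinc : ∀ w ∈ τ.verts, w ≠ [] → |U w - U w.dropLast| ≤ 1)
    (hpos : ∀ w ∈ τ.verts, 0 ≤ U w) :
    ∀ x ∈ τ.verts, ((schaefferGraph n U v).dist none (some x) : ℤ) = U x + 1 := by
  have hlab : ∀ j, |U (v (j + 1)) - U (v j)| ≤ 1 := by
    intro j
    rcases hstep j with ⟨hparent, hne⟩ | ⟨hparent, hne⟩
    · simpa [hparent] using hinc _ (hmem (j + 1)) hne
    · simpa [hparent, abs_sub_comm] using hinc _ (hmem j) hne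
  intro x hx
  obtain ⟨i, -, rfl⟩ := hsurj x hx
  rw [dist_schaefferGraph hn hper hv0 hU0 hlab (fun j => hpos _ (hmem j)) i]
  have := hpos _ hx
  omega

/-- In Schaeffer's bijection, labels become distances to the root vertex: if
`q = Φ_n(τ, U)` with `(τ, U)` a well-labeled tree with `n` edges and contour exploration
sequence `v`, then for every vertex `x` of the tree, `d_gr(∂, x) = U(x) + 1` in `q`. -/
theorem stmt_13 (n : ℕ) (hn : 1 ≤ n) (τ : PlaneTree) (hcard : τ.verts.card = n + 1)
    (v : ℕ → List ℕ) (hv0 : v 0 = []) (hper : ∀ i, v (i + 2 * n) = v i)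
    (hmem : ∀ i, v i ∈ τ.verts)
    (hstep : ∀ i, ((v (i + 1)).dropLast = v i ∧ v (i + 1) ≠ []) ∨
      ((v i).dropLast = v (i + 1) ∧ v i ≠ []))
    (hsurj : ∀ w ∈ τ.verts, ∃ i < 2 * n, v i = w)
    (hcount : ∀ w ∈ τ.verts, ((Finset.range (2 * n)).filter (fun i => v i = w)).card
      = τ.numChildren w + (if w = [] then 0 else 1))
    (U : List ℕ → ℤ) (hU0 : U [] = 0)
    (hinc : ∀ w ∈ τ.verts, w ≠ [] → |U w - U w.dropLast| ≤ 1)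
    (hpos : ∀ w ∈ τ.verts, 0 ≤ U w) :
    ∀ x ∈ τ.verts, ((schaefferGraph n U v).dist none (some x) : ℤ) = U x + 1 :=
  stmt_13_general n hn τ v hv0 hper hmem hstep hsurj U hU0 hinc hpos
end

section
/- In the quadrangulation q = Φ_n(τ, U) produced by Schaeffer's bijection from a well-labeled tree (τ, U) ∈ 𝒲⁺_n, for any two vertices u, v of τ, the graph distance satisfies the upper bound d_gr(u, v) ≤ U(u) + U(v) − 2·min{U(v_k) : i ≤ k ≤ j} + 2, where i ≤ j are any contour indices with v_i = u and v_j = v. -/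
open scoped Classical

/-!
Along the contour the labels move by at most one and return to `0` once per period, so from
any corner every smaller nonnegative label is reached again later, and the successor arcs of
Schaeffer's construction step through first occurrences of the labels `U(v_i) - 1, U(v_i) - 2, …`.
Following these arcs from `v_i` and from `v_j` down to the minimal label `m` between them
reaches two corners with label `m` and no smaller label in between; these share their successor
(or are both joined to `∂` when `m = 0`), which closes a path of length
`(U(v_i) - m) + 2 + (U(v_j) - m)`.
-/

section FirstHit

variable {f : ℕ → ℤ} {i k l p : ℕ} {m : ℤ}

/-- Junk value `0` when `f` does not take the value `m` from `i` on. -/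
noncomputable def firstHit (f : ℕ → ℤ) (i : ℕ) (m : ℤ) : ℕ :=
  sInf {l | i ≤ l ∧ f l = m}

theorem firstHit_spec (h : ∃ l, i ≤ l ∧ f l = m) :
    i ≤ firstHit f i m ∧ f (firstHit f i m) = m :=
  Nat.sInf_mem h

theorem firstHit_le (hil : i ≤ l) (hl : f l = m) : firstHit f i m ≤ l :=
  Nat.sInf_le ⟨hil, hl⟩

theorem firstHit_self (h : f i = m) : firstHit f i m = i :=
  le_antisymm (firstHit_le le_rfl h) (firstHit_spec ⟨i, le_rfl, h⟩).1

theorem firstHit_congr (hik : i ≤ k) (h : ∀ l, i ≤ l → l < k → m < f l) :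
    firstHit f i m = firstHit f k m := by
  unfold firstHit
  congr 1
  ext l
  refine ⟨fun ⟨hil, hl⟩ => ⟨?_, hl⟩, fun ⟨hkl, hl⟩ => ⟨hik.trans hkl, hl⟩⟩
  by_contra! hlk
  exact (h l hil hlk).ne' hl

theorem firstHit_add_period (hf : Function.Periodic f p) (h : ∃ l, i ≤ l ∧ f l = m) :
    firstHit f (i + p) m = firstHit f i m + p := by
  obtain ⟨hi, hm⟩ := firstHit_spec h
  have hshift : f (firstHit f i m + p) = m := by rw [hf, hm]
  obtain ⟨hip, hmp⟩ := firstHit_spec (i := i + p) ⟨_, by omega, hshift⟩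
  have hback : f (firstHit f (i + p) m - p) = m := by
    rw [← hf, Nat.sub_add_cancel (by omega), hmp]
  have := firstHit_le (by omega : i ≤ firstHit f (i + p) m - p) hback
  have := firstHit_le (by omega : i + p ≤ firstHit f i m + p) hshift
  omega

theorem exists_eq_of_abs_succ_sub_le_one_s14 (hf : ∀ l, |f (l + 1) - f l| ≤ 1) {L : ℕ}
    (hiL : i ≤ L) {t : ℤ} (hi : t ≤ f i) (hL : f L ≤ t) : ∃ l, i ≤ l ∧ l ≤ L ∧ f l = t := by
  induction L, hiL using Nat.le_induction with
  | base => exact ⟨i, le_rfl, le_rfl, le_antisymm hL hi⟩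
  | succ L hiL ih =>
    by_cases hLt : f L ≤ t
    · obtain ⟨l, hil, hlL, hl⟩ := ih hLt
      exact ⟨l, hil, by omega, hl⟩
    · have := abs_le.mp (hf L)
      exact ⟨L + 1, by omega, le_rfl, by omega⟩

theorem exists_eq_of_frequently_eq_zero (hf : ∀ l, |f (l + 1) - f l| ≤ 1)
    (hzero : ∀ i, ∃ L, i ≤ L ∧ f L = 0) {t : ℤ} (ht : 0 ≤ t) (hti : t ≤ f i) :
    ∃ l, i ≤ l ∧ f l = t := by
  obtain ⟨L, hiL, hL⟩ := hzero i
  obtain ⟨l, hil, -, hl⟩ := exists_eq_of_abs_succ_sub_le_one_s14 hf hiL hti (hL ▸ ht)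
  exact ⟨l, hil, hl⟩

theorem lt_of_lt_firstHit (hf : ∀ l, |f (l + 1) - f l| ≤ 1) (hm : m ≤ f i) (hil : i ≤ l)
    (hl : l < firstHit f i m) : m < f l := by
  by_contra! hlm
  obtain ⟨l', hil', hl'l, hl'⟩ := exists_eq_of_abs_succ_sub_le_one_s14 hf hil hm hlm
  have := firstHit_le hil' hl'
  omega

theorem firstHit_firstHit_pred (hf : ∀ l, |f (l + 1) - f l| ≤ 1)
    (h : ∃ l, i ≤ l ∧ f l = f i - 1) (hm : m < f i) :
    firstHit f (firstHit f i (f i - 1)) m = firstHit f i m := by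
  refine (firstHit_congr (firstHit_spec h).1 fun l hil hl => ?_).symm
  have := lt_of_lt_firstHit hf (by omega) hil hl
  omega

end FirstHit

section Schaeffer

variable {n : ℕ} {U : List ℕ → ℤ} {v : ℕ → List ℕ} {i : ℕ}

theorem succCorner_eq_firstHit (U : List ℕ → ℤ) (v : ℕ → List ℕ) (i : ℕ) :
    succCorner U v i = firstHit (U ∘ v) i (U (v i) - 1) :=
  rfl

theorem schaefferGraph_adj_none (hn : 0 < n) (hper : Function.Periodic v (2 * n))
    (h : U (v i) = 0) : (schaefferGraph n U v).Adj (some (v i)) none := by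
  rw [← hper.map_mod_nat i] at h ⊢
  refine ⟨Option.some_ne_none _, i % (2 * n), Nat.mod_lt _ (by omega), Or.inl ?_⟩
  simp [cornerEdge, h]

theorem schaefferGraph_adj_succCorner (hn : 0 < n) (hper : Function.Periodic v (2 * n))
    (hne : U (v i) ≠ 0) (h : ∃ l, i ≤ l ∧ U (v l) = U (v i) - 1) :
    (schaefferGraph n U v).Adj (some (v i)) (some (v (succCorner U v i))) := by
  obtain ⟨r, q, hr, rfl⟩ : ∃ r q, r < 2 * n ∧ i = r + q * (2 * n) :=
    ⟨i % (2 * n), i / (2 * n), Nat.mod_lt _ (by omega), (Nat.mod_add_div' i _).symm⟩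
  have hperq : Function.Periodic v (q * (2 * n)) := by simpa using hper.nat_mul q
  have hvr : v (r + q * (2 * n)) = v r := hperq r
  have hhit : ∃ l, r ≤ l ∧ (U ∘ v) l = U (v r) - 1 := by
    obtain ⟨l, hil, hl⟩ := h
    exact ⟨l, by omega, hvr ▸ hl⟩
  have hsucc : succCorner U v (r + q * (2 * n)) = succCorner U v r + q * (2 * n) := by
    rw [succCorner_eq_firstHit, succCorner_eq_firstHit, hvr,
      firstHit_add_period (hperq.comp U) hhit]
  rw [hsucc, hperq, hperq]
  rw [hvr] at hne
  have hlabel : U (v (succCorner U v r)) = U (v r) - 1 := (firstHit_spec hhit).2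
  refine ⟨fun heq => ?_, r, hr, Or.inl ?_⟩
  · have := congrArg U (Option.some_inj.mp heq)
    omega
  · simp [cornerEdge, hne]

theorem exists_walk_to_firstHit (hn : 0 < n) (hper : Function.Periodic v (2 * n))
    (hstep : ∀ l, |U (v (l + 1)) - U (v l)| ≤ 1) (hzero : ∀ l, ∃ L, l ≤ L ∧ U (v L) = 0)
    {m : ℤ} (hm : 0 ≤ m) (hmi : m ≤ U (v i)) :
    ∃ p : (schaefferGraph n U v).Walk (some (v i)) (some (v (firstHit (U ∘ v) i m))),
      (p.length : ℤ) = U (v i) - m := by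
  obtain ⟨d, hd⟩ := Int.eq_ofNat_of_zero_le (sub_nonneg.mpr hmi)
  induction d generalizing i with
  | zero =>
    rw [firstHit_self (f := U ∘ v) (show U (v i) = m by omega)]
    exact ⟨.nil, by simp only [SimpleGraph.Walk.length_nil]; omega⟩
  | succ d ih =>
    have hhit : ∃ l, i ≤ l ∧ (U ∘ v) l = U (v i) - 1 :=
      exists_eq_of_frequently_eq_zero (f := U ∘ v) hstep hzero (by omega)
        (show U (v i) - 1 ≤ U (v i) by omega)
    have hlabel : U (v (succCorner U v i)) = U (v i) - 1 := (firstHit_spec hhit).2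
    obtain ⟨p, hp⟩ := ih (i := succCorner U v i) (by omega) (by omega)
    have hchain : firstHit (U ∘ v) (succCorner U v i) m = firstHit (U ∘ v) i m :=
      firstHit_firstHit_pred hstep hhit (show m < U (v i) by omega)
    rw [← hchain]
    exact ⟨.cons (schaefferGraph_adj_succCorner hn hper (by omega) hhit) p,
      by simp only [SimpleGraph.Walk.length_cons]; push_cast; omega⟩

theorem exists_walk_length_two_of_forall_le (hn : 0 < n) (hper : Function.Periodic v (2 * n))
    (hstep : ∀ l, |U (v (l + 1)) - U (v l)| ≤ 1) (hzero : ∀ l, ∃ L, l ≤ L ∧ U (v L) = 0)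
    (hpos : ∀ l, 0 ≤ U (v l)) {a b : ℕ} (hab : a ≤ b) (heq : U (v a) = U (v b))
    (hmin : ∀ l, a ≤ l → l < b → U (v a) ≤ U (v l)) :
    ∃ p : (schaefferGraph n U v).Walk (some (v a)) (some (v b)), p.length = 2 := by
  by_cases h0 : U (v a) = 0
  · exact ⟨.cons (schaefferGraph_adj_none hn hper h0)
      (.cons (schaefferGraph_adj_none hn hper (heq ▸ h0)).symm .nil), rfl⟩
  have hhit : ∀ c, U (v c) = U (v a) → ∃ l, c ≤ l ∧ U (v l) = U (v c) - 1 := fun c hc =>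
    exists_eq_of_frequently_eq_zero (f := U ∘ v) hstep hzero (by have := hpos a; omega)
      (show U (v c) - 1 ≤ U (v c) by omega)
  have hsucc : succCorner U v a = succCorner U v b := by
    rw [succCorner_eq_firstHit, succCorner_eq_firstHit, ← heq]
    refine firstHit_congr hab fun l hal hlb => ?_
    have := hmin l hal hlb
    simp only [Function.comp_apply]
    omega
  have hadj_a := schaefferGraph_adj_succCorner hn hper h0 (hhit a rfl)
  have hadj_b := schaefferGraph_adj_succCorner hn hper (heq ▸ h0) (hhit b heq.symm)
  rw [hsucc] at hadj_a
  exact ⟨.cons hadj_a (.cons hadj_b.symm .nil), rfl⟩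

end Schaeffer

theorem abs_label_succ_sub_le_one (τ : PlaneTree) {v : ℕ → List ℕ} (hmem : ∀ i, v i ∈ τ.verts)
    (hstep : ∀ i, ((v (i + 1)).dropLast = v i ∧ v (i + 1) ≠ []) ∨
      ((v i).dropLast = v (i + 1) ∧ v i ≠ []))
    {U : List ℕ → ℤ} (hinc : ∀ w ∈ τ.verts, w ≠ [] → |U w - U w.dropLast| ≤ 1) (l : ℕ) :
    |U (v (l + 1)) - U (v l)| ≤ 1 := by
  rcases hstep l with ⟨hparent, hne⟩ | ⟨hparent, hne⟩
  · simpa [hparent] using hinc _ (hmem (l + 1)) hne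
  · simpa [hparent, abs_sub_comm] using hinc _ (hmem l) hne

theorem stmt_14_general (n : ℕ) (hn : 1 ≤ n) (τ : PlaneTree)
    (v : ℕ → List ℕ) (hv0 : v 0 = []) (hper : ∀ i, v (i + 2 * n) = v i)
    (hmem : ∀ i, v i ∈ τ.verts)
    (hstep : ∀ i, ((v (i + 1)).dropLast = v i ∧ v (i + 1) ≠ []) ∨
      ((v i).dropLast = v (i + 1) ∧ v i ≠ []))
    (U : List ℕ → ℤ) (hU0 : U [] = 0)
    (hinc : ∀ w ∈ τ.verts, w ≠ [] → |U w - U w.dropLast| ≤ 1)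
    (hpos : ∀ w ∈ τ.verts, 0 ≤ U w) :
    ∀ i j : ℕ, ∀ hij : i ≤ j,
      ((schaefferGraph n U v).dist (some (v i)) (some (v j)) : ℤ)
        ≤ U (v i) + U (v j)
          - 2 * ((Finset.Icc i j).image (fun k => U (v k))).min'
              (Finset.Nonempty.image (Finset.nonempty_Icc.mpr hij) _)
          + 2 := by
  have hlab_step := abs_label_succ_sub_le_one τ hmem hstep hinc
  have hlab_pos : ∀ l, 0 ≤ U (v l) := fun l => hpos _ (hmem l)
  have hlab_zero : ∀ l, ∃ L, l ≤ L ∧ U (v L) = 0 := fun l =>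
    ⟨l * (2 * n), Nat.le_mul_of_pos_right l (by omega),
      by simpa [hv0, hU0] using congrArg U (Function.Periodic.nat_mul_eq hper l)⟩
  intro i j hij
  set M := ((Finset.Icc i j).image (fun k => U (v k))).min'
    (Finset.Nonempty.image (Finset.nonempty_Icc.mpr hij) _)
  have hM_le : ∀ l, i ≤ l → l ≤ j → M ≤ U (v l) := fun l hil hlj =>
    Finset.min'_le _ _ (Finset.mem_image_of_mem _ (Finset.mem_Icc.mpr ⟨hil, hlj⟩))
  obtain ⟨k, hk, hkM⟩ : ∃ k ∈ Finset.Icc i j, U (v k) = M :=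
    Finset.mem_image.mp (Finset.min'_mem _ _)
  obtain ⟨hik, hkj⟩ := Finset.mem_Icc.mp hk
  have hM0 : 0 ≤ M := hkM ▸ hlab_pos k
  obtain ⟨hia, ha⟩ := firstHit_spec (f := U ∘ v) ⟨k, hik, hkM⟩
  obtain ⟨hjb, hb⟩ := firstHit_spec <| exists_eq_of_frequently_eq_zero (f := U ∘ v)
    hlab_step hlab_zero hM0 (hM_le j hij le_rfl)
  have hak := firstHit_le (f := U ∘ v) hik hkM
  simp only [Function.comp_apply] at ha hb
  obtain ⟨p, hp⟩ := exists_walk_to_firstHit hn hper hlab_step hlab_zero hM0 (hM_le i le_rfl hij)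
  obtain ⟨q, hq⟩ := exists_walk_to_firstHit hn hper hlab_step hlab_zero hM0 (hM_le j hij le_rfl)
  obtain ⟨r, hr⟩ := exists_walk_length_two_of_forall_le hn hper hlab_step hlab_zero hlab_pos
    (by omega) (ha.trans hb.symm) fun l hal hlb => by
      rcases le_or_gt l j with hlj | hjl
      · exact ha.symm ▸ hM_le l (by omega) hlj
      · have := lt_of_lt_firstHit (f := U ∘ v) hlab_step (hM_le j hij le_rfl) hjl.le hlb
        simp only [Function.comp_apply] at this
        omega
  have := SimpleGraph.dist_le (p.append (r.append q.reverse))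
  simp only [SimpleGraph.Walk.length_append, SimpleGraph.Walk.length_reverse] at this
  omega

/-- Bound on distances in the quadrangulation `q = Φ_n(τ, U)` built by Schaeffer's bijection:
for contour indices `i ≤ j`, the graph distance between `v_i` and `v_j` in `q` is at most
`U(v_i) + U(v_j) − 2 min{U(v_k) : i ≤ k ≤ j} + 2`. -/
theorem stmt_14 (n : ℕ) (hn : 1 ≤ n) (τ : PlaneTree) (hcard : τ.verts.card = n + 1)
    (v : ℕ → List ℕ) (hv0 : v 0 = []) (hper : ∀ i, v (i + 2 * n) = v i)
    (hmem : ∀ i, v i ∈ τ.verts)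
    (hstep : ∀ i, ((v (i + 1)).dropLast = v i ∧ v (i + 1) ≠ []) ∨
      ((v i).dropLast = v (i + 1) ∧ v i ≠ []))
    (hsurj : ∀ w ∈ τ.verts, ∃ i < 2 * n, v i = w)
    (hcount : ∀ w ∈ τ.verts, ((Finset.range (2 * n)).filter (fun i => v i = w)).card
      = τ.numChildren w + (if w = [] then 0 else 1))
    (U : List ℕ → ℤ) (hU0 : U [] = 0)
    (hinc : ∀ w ∈ τ.verts, w ≠ [] → |U w - U w.dropLast| ≤ 1)
    (hpos : ∀ w ∈ τ.verts, 0 ≤ U w) :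
    ∀ i j : ℕ, ∀ hij : i ≤ j,
      ((schaefferGraph n U v).dist (some (v i)) (some (v j)) : ℤ)
        ≤ U (v i) + U (v j)
          - 2 * ((Finset.Icc i j).image (fun k => U (v k))).min'
              (Finset.Nonempty.image (Finset.nonempty_Icc.mpr hij) _)
          + 2 :=
  stmt_14_general n hn τ v hv0 hper hmem hstep U hU0 hinc hpos
end

section
/- Let g : [0,1] → ℝ≥0 be continuous with g(0) = g(1) = 0, and define m_g(s,t) = min{g(r) : s∧t ≤ r ≤ s∨t} and δ_g(s,t) = g(s) + g(t) − 2 m_g(s,t). Then δ_g is a pseudometric on [0,1]: it is nonnegative, symmetric, vanishes on the diagonal, and satisfies the triangle inequality δ_g(s,u) ≤ δ_g(s,t) + δ_g(t,u). -/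
open Set

/-- `m_g(s,t)`: the minimum (infimum) of `g` over the closed interval between `s` and `t`. -/
noncomputable def mg (g : ℝ → ℝ) (s t : ℝ) : ℝ := sInf (g '' Set.uIcc s t)

/-- `δ_g(s,t) = g(s) + g(t) − 2 m_g(s,t)`, the tree pseudometric coded by `g`. -/
noncomputable def deltag (g : ℝ → ℝ) (s t : ℝ) : ℝ := g s + g t - 2 * mg g s t

/-
The only nontrivial axiom is the triangle inequality. Since `[s, u]` is covered by `[s, t]` and
`[t, u]`, we get `min (m_g(s,t)) (m_g(t,u)) ≤ m_g(s,u)`, while `max (m_g(s,t)) (m_g(t,u)) ≤ g(t)`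
because `t` lies in both intervals. Adding the two gives `m_g(s,t) + m_g(t,u) ≤ g(t) + m_g(s,u)`,
which is the triangle inequality for `δ_g` after cancelling `g(s)` and `g(u)`.
-/

lemma mg_comm (g : ℝ → ℝ) (s t : ℝ) : mg g s t = mg g t s := by
  rw [mg, mg, uIcc_comm]

lemma mg_self (g : ℝ → ℝ) (s : ℝ) : mg g s s = g s := by
  simp [mg]

lemma deltag_comm (g : ℝ → ℝ) (s t : ℝ) : deltag g s t = deltag g t s := by
  rw [deltag, deltag, mg_comm, add_comm (g s)]

lemma deltag_self (g : ℝ → ℝ) (s : ℝ) : deltag g s s = 0 := by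
  rw [deltag, mg_self]
  ring

section

variable {g : ℝ → ℝ} {s t u r : ℝ}

lemma mg_le (hc : ContinuousOn g (uIcc s t)) (hr : r ∈ uIcc s t) : mg g s t ≤ g r :=
  csInf_le (isCompact_uIcc.bddBelow_image hc) (mem_image_of_mem g hr)

lemma min_mg_le_mg (hst : ContinuousOn g (uIcc s t)) (htu : ContinuousOn g (uIcc t u)) :
    min (mg g s t) (mg g t u) ≤ mg g s u := by
  refine le_csInf (nonempty_uIcc.image g) ?_
  rintro _ ⟨r, hr, rfl⟩
  rcases uIcc_subset_uIcc_union_uIcc hr with hr | hr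
  · exact (min_le_left _ _).trans (mg_le hst hr)
  · exact (min_le_right _ _).trans (mg_le htu hr)

lemma deltag_nonneg (hc : ContinuousOn g (uIcc s t)) : 0 ≤ deltag g s t := by
  have hs := mg_le hc left_mem_uIcc
  have ht := mg_le hc right_mem_uIcc
  rw [deltag]
  linarith

lemma deltag_triangle (hst : ContinuousOn g (uIcc s t)) (htu : ContinuousOn g (uIcc t u)) :
    deltag g s u ≤ deltag g s t + deltag g t u := by
  have hmin := min_mg_le_mg hst htu
  have hmax : max (mg g s t) (mg g t u) ≤ g t :=
    max_le (mg_le hst right_mem_uIcc) (mg_le htu left_mem_uIcc)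
  have hsum := min_add_max (mg g s t) (mg g t u)
  simp only [deltag]
  linarith

end

theorem stmt_15_general (g : ℝ → ℝ) (hc : ContinuousOn g (Set.Icc 0 1)) :
    (∀ s ∈ Set.Icc (0 : ℝ) 1, ∀ t ∈ Set.Icc (0 : ℝ) 1, 0 ≤ deltag g s t) ∧
    (∀ s ∈ Set.Icc (0 : ℝ) 1, ∀ t ∈ Set.Icc (0 : ℝ) 1, deltag g s t = deltag g t s) ∧
    (∀ s ∈ Set.Icc (0 : ℝ) 1, deltag g s s = 0) ∧
    (∀ s ∈ Set.Icc (0 : ℝ) 1, ∀ t ∈ Set.Icc (0 : ℝ) 1, ∀ u ∈ Set.Icc (0 : ℝ) 1,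
      deltag g s u ≤ deltag g s t + deltag g t u) := by
  have hc' {s t : ℝ} (hs : s ∈ Icc (0 : ℝ) 1) (ht : t ∈ Icc (0 : ℝ) 1) :
      ContinuousOn g (uIcc s t) :=
    hc.mono (uIcc_subset_Icc hs ht)
  exact ⟨fun s hs t ht => deltag_nonneg (hc' hs ht), fun s _ t _ => deltag_comm g s t,
    fun s _ => deltag_self g s,
    fun s hs t ht u hu => deltag_triangle (hc' hs ht) (hc' ht hu)⟩

/-- For `g : [0,1] → ℝ≥0` continuous with `g(0) = g(1) = 0`, the function
`δ_g(s,t) = g(s) + g(t) − 2 m_g(s,t)` is a pseudometric on `[0,1]`. -/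
theorem stmt_15 (g : ℝ → ℝ) (hc : ContinuousOn g (Set.Icc 0 1))
    (hnn : ∀ t ∈ Set.Icc (0 : ℝ) 1, 0 ≤ g t) (h0 : g 0 = 0) (h1 : g 1 = 0) :
    (∀ s ∈ Set.Icc (0 : ℝ) 1, ∀ t ∈ Set.Icc (0 : ℝ) 1, 0 ≤ deltag g s t) ∧
    (∀ s ∈ Set.Icc (0 : ℝ) 1, ∀ t ∈ Set.Icc (0 : ℝ) 1, deltag g s t = deltag g t s) ∧
    (∀ s ∈ Set.Icc (0 : ℝ) 1, deltag g s s = 0) ∧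
    (∀ s ∈ Set.Icc (0 : ℝ) 1, ∀ t ∈ Set.Icc (0 : ℝ) 1, ∀ u ∈ Set.Icc (0 : ℝ) 1,
      deltag g s u ≤ deltag g s t + deltag g t u) :=
  stmt_15_general g hc
end
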